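/- Let α > −1, let q ≥ 0 be an integer, and let m ≥ 1 be an integer. Then the set of real zeros of P_{2m+1}^{α,q} equals {−1} together with the set of real zeros of P_{2m}^{α+1,q}; in particular, P_{2m}^{α+1,q}(−1) ≠ 0 and the largest real zero of P_{2m+1}^{α,q} equals the largest real zero of P_{2m}^{α+1,q}. -/

import Mathlib

open MeasureTheory intervalIntegral Polynomial

/-- Pochhammer symbol `(a)_k = a (a+1) ⋯ (a+k-1)`. -/
noncomputable def poch (a : ℝ) (k : ℕ) : ℝ := ∏ i ∈ Finset.range k, (a + i)

/-- `Peven α q n x = P_{2n}^{α,q}(x)`, the monic generalized Gegenbauer-type polynomial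
`Σ_{k=0}^{n} (−n)_k (−n−q−1/2)_k / (k! (−2n−α−q−1/2)_k) x^{2n−2k}`. -/
noncomputable def Peven (α : ℝ) (q n : ℕ) (x : ℝ) : ℝ :=
  ∑ k ∈ Finset.range (n + 1),
    poch (-(n : ℝ)) k * poch (-(n : ℝ) - q - 1/2) k /
      ((Nat.factorial k : ℝ) * poch (-(2 * (n : ℝ)) - α - q - 1/2) k) * x ^ (2*n - 2*k)

/-- `Podd α q n x = P_{2n+1}^{α,q}(x) = (1+x) P_{2n}^{α+1,q}(x)`. -/
noncomputable def Podd (α : ℝ) (q n : ℕ) (x : ℝ) : ℝ := (1 + x) * Peven (α + 1) q n x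

/-- `P α q n x = P_n^{α,q}(x)`. -/
noncomputable def P (α : ℝ) (q : ℕ) (n : ℕ) (x : ℝ) : ℝ :=
  if Even n then Peven α q (n / 2) x else Podd α q (n / 2) x

/-!
Write `P_{2m}^{α+1,q}(x) = Q(x²)`. By the Chu–Vandermonde identity, `Q(1)` is a quotient of two
Pochhammer symbols of the same sign, so `P_{2m}^{α+1,q}(-1) = Q(1) > 0` and the zeros of
`P_{2m+1}^{α,q} = (1 + x) P_{2m}^{α+1,q}` are `-1` and those of `P_{2m}^{α+1,q}`. Integrating `Q`
against the Beta weight `y^{q+1/2} (1-y)^{α+1}` on `(0, 1)` turns its coefficients into Beta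
moments, and Chu–Vandermonde again sums them to a multiple of `(1-m)_m = 0`. Hence `Q` changes
sign in `(0, 1)` and `P_{2m}^{α+1,q}` has a positive zero; its zero set is finite, so it has a
largest zero, which is positive and therefore also the largest zero of `P_{2m+1}^{α,q}`.
-/

lemma poch_zero (a : ℝ) : poch a 0 = 1 := by simp [poch]

lemma poch_succ (a : ℝ) (k : ℕ) : poch a (k + 1) = poch a k * (a + k) := by
  simp [poch, Finset.prod_range_succ]

lemma poch_succ' (a : ℝ) (k : ℕ) : poch a (k + 1) = a * poch (a + 1) k := by
  simp only [poch, Finset.prod_range_succ', Nat.cast_add, Nat.cast_one, Nat.cast_zero, add_zero]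
  rw [mul_comm]
  exact congrArg (a * ·) (Finset.prod_congr rfl fun i _ => by ring)

lemma poch_ne_zero {a : ℝ} {k : ℕ} (h : ∀ i < k, a + i ≠ 0) : poch a k ≠ 0 :=
  Finset.prod_ne_zero_iff.2 fun i hi => h i (Finset.mem_range.1 hi)

lemma poch_eq_zero {a : ℝ} {k i : ℕ} (hik : i < k) (h : a + i = 0) : poch a k = 0 :=
  Finset.prod_eq_zero (Finset.mem_range.2 hik) h

lemma neg_one_pow_mul_poch_pos {a : ℝ} {k : ℕ} (h : ∀ i < k, a + i < 0) :
    0 < (-1) ^ k * poch a k := by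
  induction k with
  | zero => simp [poch_zero]
  | succ k ih =>
    rw [poch_succ, pow_succ, show (-1) ^ k * -1 * (poch a k * (a + k)) =
      ((-1) ^ k * poch a k) * -(a + k) by ring]
    exact mul_pos (ih fun i hi => h i (by omega)) (neg_pos.2 (h k k.lt_succ_self))

lemma poch_div_poch_pos {a c : ℝ} {k : ℕ} (ha : ∀ i < k, a + i < 0)
    (hc : ∀ i < k, c + i < 0) :
    0 < poch a k / poch c k := by
  rw [← mul_div_mul_left _ _ (pow_ne_zero k (neg_ne_zero.2 one_ne_zero))]
  exact div_pos (neg_one_pow_mul_poch_pos ha) (neg_one_pow_mul_poch_pos hc)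

lemma poch_neg_natCast {n k : ℕ} (hk : k ≤ n) :
    poch (-(n : ℝ)) k = (-1) ^ k * k.factorial * n.choose k := by
  induction k with
  | zero => simp [poch_zero]
  | succ k ih =>
    have hchoose : (n.choose (k + 1) : ℝ) * (k + 1) = n.choose k * (n - k) := by
      have := congrArg (Nat.cast : ℕ → ℝ) (Nat.choose_succ_right_eq n k)
      push_cast [Nat.cast_sub (show k ≤ n by omega)] at this
      exact this
    rw [poch_succ, ih (by omega), Nat.factorial_succ]
    push_cast
    linear_combination ((-1 : ℝ) ^ k * k.factorial) * hchoose

/-- Chu–Vandermonde identity. -/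
theorem sum_choose_mul_poch_div_poch (n : ℕ) {b c : ℝ} (hc : ∀ i < n, c + i ≠ 0) :
    ∑ k ∈ Finset.range (n + 1), (n.choose k : ℝ) * ((-1) ^ k * poch b k / poch c k) =
      poch (c - b) n / poch c n := by
  induction n generalizing b c with
  | zero => simp [poch_zero]
  | succ n ih =>
    have hc0 : c ≠ 0 := by simpa using hc 0 (by omega)
    have hcn : c + n ≠ 0 := hc n (by omega)
    have hc1 : ∀ i < n, c + 1 + i ≠ 0 := fun i hi => by
      simpa [add_assoc, add_comm (1 : ℝ)] using hc (i + 1) (by omega)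
    have hshift : ∀ i, (-1) ^ (i + 1) * poch b (i + 1) / poch c (i + 1) =
        -(b / c) * ((-1) ^ i * poch (b + 1) i / poch (c + 1) i) := fun i => by
      rw [poch_succ' b, poch_succ' c, mul_div_mul_comm]
      field_simp
      ring
    have hpoch : poch c n * (c + n) = c * poch (c + 1) n := by rw [← poch_succ, poch_succ']
    have hsplit : ∑ i ∈ Finset.range (n + 1),
        (n.choose i : ℝ) * ((-1) ^ (i + 1) * poch b (i + 1) / poch c (i + 1)) =
        -(b / c) * ∑ i ∈ Finset.range (n + 1),
          (n.choose i : ℝ) * ((-1) ^ i * poch (b + 1) i / poch (c + 1) i) := by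
      rw [Finset.mul_sum]
      exact Finset.sum_congr rfl fun i _ => by rw [hshift]; ring
    refine (Finset.sum_choose_succ_mul (fun i _ => (-1) ^ i * poch b i / poch c i) n).trans ?_
    rw [hsplit, ih fun i hi => hc i (by omega), ih hc1, poch_succ, poch_succ,
      show c + 1 - (b + 1) = c - b by ring]
    have := poch_ne_zero hc1
    have := poch_ne_zero fun i (hi : i < n) => hc i (by omega)
    field_simp
    linear_combination -(poch (c - b) n * b) * hpoch

open ProbabilityTheory

lemma continuous_rpow_mul_one_sub_rpow {s t : ℝ} (hs : 0 ≤ s) (ht : 0 ≤ t) :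
    Continuous fun y : ℝ => y ^ s * (1 - y) ^ t :=
  (Real.continuous_rpow_const hs).mul ((Real.continuous_rpow_const ht).comp (by fun_prop))

lemma integral_rpow_mul_one_sub_rpow {a c : ℝ} (ha : 0 < a) (hc : 0 < c) :
    ∫ y in (0 : ℝ)..1, y ^ (a - 1) * (1 - y) ^ (c - 1) = beta a c := by
  have hcomplex : Complex.betaIntegral a c =
      ↑(∫ y in (0 : ℝ)..1, y ^ (a - 1) * (1 - y) ^ (c - 1)) := by
    rw [Complex.betaIntegral, ← intervalIntegral.integral_ofReal]
    refine intervalIntegral.integral_congr fun y hy => ?_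
    rw [Set.uIcc_of_le zero_le_one] at hy
    simp only [Complex.ofReal_mul, Complex.ofReal_cpow hy.1,
      Complex.ofReal_cpow (sub_nonneg.2 hy.2)]
    push_cast
    rfl
  rw [beta_eq_betaIntegralReal a c ha hc, hcomplex, Complex.ofReal_re]

lemma integral_pow_mul_rpow_mul_one_sub_rpow (j : ℕ) {s t : ℝ} (hs : 0 < s) (ht : -1 < t) :
    ∫ y in (0 : ℝ)..1, y ^ j * (y ^ s * (1 - y) ^ t) = beta (j + s + 1) (t + 1) := by
  rw [← integral_rpow_mul_one_sub_rpow (by positivity) (by linarith)]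
  refine intervalIntegral.integral_congr fun y hy => ?_
  rw [Set.uIcc_of_le zero_le_one] at hy
  simp only [add_sub_cancel_right, Real.rpow_add' hy.1 (by positivity : (j : ℝ) + s ≠ 0),
    Real.rpow_natCast, mul_assoc]

lemma beta_add_one {a c : ℝ} (ha : 0 < a) (hc : 0 < c) :
    (a + c) * beta (a + 1) c = a * beta a c := by
  have := Real.Gamma_pos_of_pos (add_pos ha hc)
  rw [beta, beta, add_right_comm, Real.Gamma_add_one ha.ne', Real.Gamma_add_one (add_pos ha hc).ne']
  field_simp

lemma beta_sub_natCast_mul_poch {a c : ℝ} (hc : 0 < c) {k : ℕ} (hk : (k : ℝ) < a) :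
    beta (a - k) c * poch (1 - a) k = beta a c * poch (1 - a - c) k := by
  induction k with
  | zero => simp [poch_zero]
  | succ k ih =>
    push_cast at hk
    have hrec := beta_add_one (a := a - (k + 1)) (by linarith) hc
    rw [show a - (k + 1) + 1 = a - k by ring] at hrec
    rw [poch_succ, poch_succ, ← mul_assoc (beta a c), ← ih (by linarith)]
    push_cast
    linear_combination poch (1 - a) k * hrec

lemma exists_mem_Ioo_eq_zero_of_integral_mul_eq_zero {f w : ℝ → ℝ} {a b : ℝ} (hab : a < b)
    (hf : Continuous f) (hw : Continuous w) (hw_pos : ∀ y ∈ Set.Ioo a b, 0 < w y)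
    (horth : ∫ y in a..b, f y * w y = 0) : ∃ y ∈ Set.Ioo a b, f y = 0 := by
  by_contra! hne
  have hsign : ∀ y ∈ Set.Ioo a b, ∀ z ∈ Set.Ioo a b, 0 < f y * f z := by
    intro y hy z hz
    by_contra! hnonpos
    rcases mul_nonpos_iff.1 hnonpos with ⟨hfy, hfz⟩ | ⟨hfy, hfz⟩
    · obtain ⟨x, hx, hfx⟩ :=
        isPreconnected_Ioo.intermediate_value hz hy hf.continuousOn ⟨hfz, hfy⟩
      exact hne x hx hfx
    · obtain ⟨x, hx, hfx⟩ :=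
        isPreconnected_Ioo.intermediate_value hy hz hf.continuousOn ⟨hfy, hfz⟩
      exact hne x hx hfx
  have hmid : (a + b) / 2 ∈ Set.Ioo a b := ⟨by linarith, by linarith⟩
  have hpos : 0 < ∫ y in a..b, f ((a + b) / 2) * (f y * w y) := by
    refine intervalIntegral.intervalIntegral_pos_of_pos_on
      ((continuous_const.mul (hf.mul hw)).intervalIntegrable a b) (fun y hy => ?_) hab
    rw [← mul_assoc]
    exact mul_pos (hsign _ hmid y hy) (hw_pos y hy)
  rw [intervalIntegral.integral_const_mul, horth, mul_zero] at hpos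
  exact hpos.false

namespace Peven

noncomputable def coeff (α : ℝ) (q n k : ℕ) : ℝ :=
  poch (-(n : ℝ)) k * poch (-(n : ℝ) - q - 1/2) k /
    ((Nat.factorial k : ℝ) * poch (-(2 * (n : ℝ)) - α - q - 1/2) k)

noncomputable def Q (α : ℝ) (q n : ℕ) : ℝ[X] :=
  ∑ k ∈ Finset.range (n + 1), C (coeff α q n k) * X ^ (n - k)

lemma eq_eval_Q (α : ℝ) (q n : ℕ) (x : ℝ) : Peven α q n x = (Q α q n).eval (x ^ 2) := by
  simp only [Peven, Q, eval_finsetSum, eval_C, eval_mul, eval_pow, eval_X, ← pow_mul]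
  exact Finset.sum_congr rfl fun k _ => by rw [coeff, Nat.mul_sub]

lemma coeff_eq (α : ℝ) (q : ℕ) {n k : ℕ} (hk : k ≤ n) :
    coeff α q n k = n.choose k *
      ((-1) ^ k * poch (-(n : ℝ) - q - 1/2) k / poch (-(2 * (n : ℝ)) - α - q - 1/2) k) := by
  rw [coeff, poch_neg_natCast hk, mul_div_assoc',
    show (-1) ^ k * (k.factorial : ℝ) * n.choose k * poch (-(n : ℝ) - q - 1/2) k =
      k.factorial * (n.choose k * ((-1) ^ k * poch (-(n : ℝ) - q - 1/2) k)) by ring,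
    mul_div_mul_left _ _ (Nat.cast_ne_zero.2 k.factorial_ne_zero)]

lemma denom_add_neg {α : ℝ} (hα : -1 < α) (q n : ℕ) :
    ∀ i < n, -(2 * (n : ℝ)) - α - q - 1/2 + i < 0 := by
  intro i hi
  have : (i : ℝ) + 1 ≤ n := by exact_mod_cast hi
  have : (0 : ℝ) ≤ q := q.cast_nonneg
  linarith

lemma Q_eval_one_pos {α : ℝ} (hα : -1 < α) (q n : ℕ) : 0 < (Q α q n).eval 1 := by
  have hsum : (Q α q n).eval 1 = poch (-n - α) n / poch (-(2 * (n : ℝ)) - α - q - 1/2) n := by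
    simp only [Q, eval_finsetSum, eval_C, eval_mul, eval_pow, eval_X, one_pow, mul_one]
    rw [Finset.sum_congr rfl fun k hk => coeff_eq α q (Finset.mem_range_succ_iff.1 hk),
      sum_choose_mul_poch_div_poch n fun i hi => (denom_add_neg hα q n i hi).ne]
    congr 2
    ring
  rw [hsum]
  refine poch_div_poch_pos (fun i hi => ?_) (denom_add_neg hα q n)
  have : (i : ℝ) + 1 ≤ n := by exact_mod_cast hi
  linarith

lemma apply_neg_one_pos {α : ℝ} (hα : -1 < α) (q n : ℕ) : 0 < Peven α q n (-1) := by
  rw [eq_eval_Q, neg_one_sq]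
  exact Q_eval_one_pos hα q n

lemma finite_setOf_eq_zero {α : ℝ} (hα : -1 < α) (q n : ℕ) :
    {x | Peven α q n x = 0}.Finite := by
  have hcomp : ∀ x, Peven α q n x = ((Q α q n).comp (X ^ 2)).eval x := fun x => by
    rw [eq_eval_Q, eval_comp, eval_pow, eval_X]
  have hne : (Q α q n).comp (X ^ 2) ≠ 0 := fun h =>
    (apply_neg_one_pos hα q n).ne' (by rw [hcomp, h, eval_zero])
  simpa only [hcomp, IsRoot.def] using finite_setOfPred_isRoot hne

lemma coeff_mul_beta {α : ℝ} (hα : -1 < α) (q : ℕ) {n k : ℕ} (hk : k ≤ n) :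
    coeff α q n k * beta (n + q + 3/2 - k) (α + 1) =
      beta (n + q + 3/2) (α + 1) * (n.choose k * ((-1) ^ k *
        poch (-(n : ℝ) - q - 1/2 - α - 1) k / poch (-(2 * (n : ℝ)) - α - q - 1/2) k)) := by
  have hkn : (k : ℝ) ≤ n := by exact_mod_cast hk
  have hq : (0 : ℝ) ≤ q := q.cast_nonneg
  have hbeta := beta_sub_natCast_mul_poch (a := n + q + 3/2) (c := α + 1) (by linarith)
    (k := k) (by linarith)
  rw [show 1 - ((n : ℝ) + q + 3/2) = -(n : ℝ) - q - 1/2 by ring,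
    show -(n : ℝ) - q - 1/2 - (α + 1) = -(n : ℝ) - q - 1/2 - α - 1 by ring] at hbeta
  rw [coeff_eq α q hk]
  linear_combination (n.choose k * (-1) ^ k / poch (-(2 * (n : ℝ)) - α - q - 1/2) k) * hbeta

lemma integral_Q_mul_weight_eq_zero {α : ℝ} (hα : 0 ≤ α) (q : ℕ) {n : ℕ} (hn : 1 ≤ n) :
    ∫ y in (0 : ℝ)..1, (Q α q n).eval y * (y ^ ((q : ℝ) + 1/2) * (1 - y) ^ α) = 0 := by
  have hweight := continuous_rpow_mul_one_sub_rpow (s := (q : ℝ) + 1/2) (by positivity) hα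
  have hmoment : ∀ k ≤ n,
      ∫ y in (0 : ℝ)..1, y ^ (n - k) * (y ^ ((q : ℝ) + 1/2) * (1 - y) ^ α) =
        beta (n + q + 3/2 - k) (α + 1) := fun k hk => by
    rw [integral_pow_mul_rpow_mul_one_sub_rpow _ (by positivity) (by linarith)]
    push_cast [Nat.cast_sub hk]
    congr 1
    ring
  have hvanish : poch (-(2 * (n : ℝ)) - α - q - 1/2 - (-(n : ℝ) - q - 1/2 - α - 1)) n = 0 :=
    poch_eq_zero (Nat.sub_lt hn zero_lt_one) (by push_cast [Nat.cast_sub hn]; ring)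
  simp only [Q, eval_finsetSum, eval_C, eval_mul, eval_pow, eval_X, Finset.sum_mul, mul_assoc]
  have hint : ∀ k ∈ Finset.range (n + 1), IntervalIntegrable
      (fun y => coeff α q n k * (y ^ (n - k) * (y ^ ((q : ℝ) + 1/2) * (1 - y) ^ α)))
      volume 0 1 :=
    fun k _ => (continuous_const.mul ((continuous_pow _).mul hweight)).intervalIntegrable 0 1
  rw [intervalIntegral.integral_finsetSum hint]
  simp only [intervalIntegral.integral_const_mul]
  rw [Finset.sum_congr rfl fun k hk => by
      rw [hmoment k (Finset.mem_range_succ_iff.1 hk),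
        coeff_mul_beta (by linarith) q (Finset.mem_range_succ_iff.1 hk)],
    ← Finset.mul_sum,
    sum_choose_mul_poch_div_poch n fun i hi => (denom_add_neg (by linarith) q n i hi).ne,
    hvanish, zero_div, mul_zero]

lemma exists_pos_root {α : ℝ} (hα : 0 ≤ α) (q : ℕ) {n : ℕ} (hn : 1 ≤ n) :
    ∃ x, 0 < x ∧ Peven α q n x = 0 := by
  obtain ⟨y, hy, hQy⟩ := exists_mem_Ioo_eq_zero_of_integral_mul_eq_zero zero_lt_one
    (Q α q n).continuous (continuous_rpow_mul_one_sub_rpow (by positivity) hα)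
    (fun y hy => mul_pos (Real.rpow_pos_of_pos hy.1 _) (Real.rpow_pos_of_pos (sub_pos.2 hy.2) _))
    (integral_Q_mul_weight_eq_zero hα q hn)
  exact ⟨√y, Real.sqrt_pos.2 hy.1, by rw [eq_eval_Q, Real.sq_sqrt hy.1.le, hQy]⟩

end Peven

/-- The zero set of `P_{2m+1}^{α,q}` is `{−1}` together with the zero set of
`P_{2m}^{α+1,q}`; in particular `P_{2m}^{α+1,q}(−1) ≠ 0` and the largest real zeros of the
two polynomials coincide. -/
theorem zeros_of_Podd (α : ℝ) (hα : -1 < α) (q : ℕ) (m : ℕ) (hm : 1 ≤ m) :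
    {t : ℝ | Podd α q m t = 0} = insert (-1 : ℝ) {t : ℝ | Peven (α + 1) q m t = 0} ∧
    Peven (α + 1) q m (-1) ≠ 0 ∧
    ∃ b : ℝ, IsGreatest {t : ℝ | Podd α q m t = 0} b ∧
      IsGreatest {t : ℝ | Peven (α + 1) q m t = 0} b := by
  have hzeros :
      {t : ℝ | Podd α q m t = 0} = insert (-1 : ℝ) {t : ℝ | Peven (α + 1) q m t = 0} := by
    ext t
    simp [Podd, add_eq_zero_iff_eq_neg']
  obtain ⟨x, hx, hPx⟩ := Peven.exists_pos_root (by linarith : 0 ≤ α + 1) q hm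
  obtain ⟨b, hbZ, hb⟩ := Set.exists_max_image _ id
    (Peven.finite_setOf_eq_zero (by linarith) q m) ⟨x, hPx⟩
  have hgreatest : IsGreatest {t : ℝ | Peven (α + 1) q m t = 0} b := ⟨hbZ, hb⟩
  refine ⟨hzeros, (Peven.apply_neg_one_pos (by linarith) q m).ne', b, ?_, hgreatest⟩
  rw [hzeros, ← max_eq_right (show (-1 : ℝ) ≤ b by linarith [hgreatest.2 hPx])]
  exact hgreatest.insert (-1)
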